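/- If Ψ_j = N_1 for all j (no backhaul cooperation), i.e., every Ψ_j is a fixed set of size N_1 disjoint from the available set, then the maximum integer J for which there exist nonempty pairwise disjoint subsets Λ_1,...,Λ_J of a set of size N_2 satisfying |Ψ_j| + Σ_{i≠j}|Λ_i| < M for all j equals min(max(M − N_1, 0), N_2). -/

import Mathlib

/-!
Each `Λ i` is nonempty, so the `Λ i` with `i ≠ j` contribute at least `J - 1` to the interference
sum: feasibility forces `N₁ + (J - 1) < M`, i.e. `J ≤ M - N₁` when `J > 0`, and disjointness
forces `J ≤ N₂`. Conversely `min (M - N₁) N₂` distinct singletons are feasible.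
-/

open Finset Function

theorem Fintype.card_le_card_of_pairwise_disjoint_nonempty {ι α : Type*} [Fintype ι] [Fintype α]
    [DecidableEq α] {Λ : ι → Finset α} (hne : ∀ i, (Λ i).Nonempty)
    (hdisj : Pairwise (Disjoint on Λ)) : Fintype.card ι ≤ Fintype.card α :=
  (card_le_card_biUnion (fun _ _ _ _ hij => hdisj hij) fun i _ => hne i).trans (card_le_univ _)

theorem Finset.card_sub_one_le_sum_card_sdiff_singleton {ι α : Type*} [Fintype ι] [DecidableEq ι]
    {Λ : ι → Finset α} (hne : ∀ i, (Λ i).Nonempty) (j : ι) :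
    Fintype.card ι - 1 ≤ ∑ i ∈ univ \ {j}, (Λ i).card := by
  have hcard : (univ \ {j}).card = Fintype.card ι - 1 := by
    rw [card_univ_sdiff, card_singleton]
  simpa [hcard] using card_nsmul_le_sum (univ \ {j}) (fun i => (Λ i).card) 1
    fun i _ => (hne i).card_pos

theorem exists_pairwise_disjoint_singletons {K N : ℕ} (h : K ≤ N) :
    ∃ Λ : Fin K → Finset (Fin N), (∀ j, (Λ j).Nonempty) ∧ Pairwise (Disjoint on Λ) ∧
      ∀ j, ∑ i ∈ univ \ {j}, (Λ i).card = K - 1 := by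
  refine ⟨fun j => {Fin.castLE h j}, fun j => singleton_nonempty _, fun i j hij => ?_, fun j => ?_⟩
  · simpa [onFun, Fin.castLE_inj] using hij
  · simp [card_univ_sdiff]

theorem dof_no_cooperation (M N₁ N₂ : ℕ) :
    IsGreatest {J : ℕ | ∃ Λ : Fin J → Finset (Fin N₂),
      (∀ j, (Λ j).Nonempty) ∧
      (∀ i j, i ≠ j → Disjoint (Λ i) (Λ j)) ∧
      (∀ j, N₁ + ∑ i ∈ Finset.univ \ {j}, (Λ i).card < M)}
      (min (M - N₁) N₂) := by
  constructor
  · obtain ⟨Λ, hne, hdisj, hsum⟩ := exists_pairwise_disjoint_singletons (min_le_right (M - N₁) N₂)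
    refine ⟨Λ, hne, fun i j => @hdisj i j, fun j => ?_⟩
    rw [hsum j]
    have := j.pos
    have := min_le_left (M - N₁) N₂
    omega
  · rintro J ⟨Λ, hne, hdisj, hlt⟩
    have hN₂ : J ≤ N₂ := by
      simpa using Fintype.card_le_card_of_pairwise_disjoint_nonempty hne fun i j => hdisj i j
    rcases J.eq_zero_or_pos with rfl | hJ
    · exact Nat.zero_le _
    · have hsum := card_sub_one_le_sum_card_sdiff_singleton hne (⟨0, hJ⟩ : Fin J)
      have := hlt ⟨0, hJ⟩
      simp only [Fintype.card_fin] at hsum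
      omega
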